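/- Let K be a shifted simplicial complex on the index set [n] with ordering 1 < ⋯ < n. Then the inclusion link_K(1) → rest_K{2,…,n} is filtered by a sequence of simplicial complexes link_K(1) = L_0 ⊆ L_1 ⊆ ⋯ ⊆ L_m = rest_K{2,…,n}, where for each i, L_i = L_{i-1} ∪ τ_i for a simplex τ_i satisfying: (a) τ_i is a maximal face of rest_K{2,…,n}; (b) τ_i ∉ link_K(1); (c) ∂τ_i ⊆ link_K(1). -/

import Mathlib

noncomputable section

open ContinuousMap

/-! ### Basic point-set constructions -/

/-- The quotient of `X` collapsing the subset `S` to a single point. -/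
abbrev Collapse {X : Type*} [TopologicalSpace X] (S : Set X) : Type _ :=
  Quot (fun a b : X => a ∈ S ∧ b ∈ S)

namespace Collapse

variable {X Y : Type*} [TopologicalSpace X] [TopologicalSpace Y]

/-- The quotient map. -/
def mk (S : Set X) (x : X) : Collapse S := Quot.mk _ x

lemma continuous_mk {S : Set X} : Continuous (mk S) := continuous_quot_mk

/-- The quotient map as a continuous map. -/
def mkCM (S : Set X) : C(X, Collapse S) := ⟨mk S, continuous_mk⟩

/-- A continuous map sending `S` into `T` descends to the collapsed spaces. -/
def desc {S : Set X} {T : Set Y} (f : C(X, Y)) (h : Set.MapsTo f S T) :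
    C(Collapse S, Collapse T) :=
  ⟨Quot.lift (fun x => mk T (f x)) (fun a b hab => Quot.sound ⟨h hab.1, h hab.2⟩),
    continuous_quot_lift _ (continuous_mk.comp f.continuous)⟩

end Collapse

/-- The (unreduced) cone on a space: `CX = (X × I)/(X × {1})`, containing `X`
as the subspace `X × {0}`. -/
abbrev Cone (X : Type*) [TopologicalSpace X] : Type _ :=
  Collapse {p : X × unitInterval | p.2 = 1}

/-- The canonical inclusion of the base `X` into the cone `CX`. -/
def Cone.incl {X : Type*} [TopologicalSpace X] : C(X, Cone X) :=
  ⟨fun x => Collapse.mk _ (x, 0),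
    Collapse.continuous_mk.comp (continuous_id.prodMk continuous_const)⟩

/-- The join `A ∗ B = A × I × B / ∼`, where `(a, 0, b) ∼ (a, 0, b')` and
`(a, 1, b) ∼ (a', 1, b)`. -/
abbrev Join (A B : Type*) [TopologicalSpace A] [TopologicalSpace B] : Type _ :=
  Quot (fun p q : A × unitInterval × B =>
    (p.2.1 = 0 ∧ q.2.1 = 0 ∧ p.1 = q.1) ∨ (p.2.1 = 1 ∧ q.2.1 = 1 ∧ p.2.2 = q.2.2))

/-- Points of the join. -/
def Join.mk {A B : Type*} [TopologicalSpace A] [TopologicalSpace B]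
    (a : A) (t : unitInterval) (b : B) : Join A B :=
  Quot.mk _ (a, t, b)

/-- The join of a finite family of spaces: formal convex combinations
`t₁ x₁ + ⋯ + tₙ xₙ`, where the coordinate `xᵢ` is irrelevant when `tᵢ = 0`. -/
abbrev JoinFamily {ι : Type*} [Fintype ι] (Y : ι → Type*) [∀ i, TopologicalSpace (Y i)] :
    Type _ :=
  Quot (fun p q : (∀ i, Y i) × (stdSimplex ℝ ι) =>
    p.2 = q.2 ∧ ∀ i, (p.2 : ι → ℝ) i ≠ 0 → p.1 i = q.1 i)

/-- Points of the join of a family. -/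
def JoinFamily.mk {ι : Type*} [Fintype ι] {Y : ι → Type*} [∀ i, TopologicalSpace (Y i)]
    (y : ∀ i, Y i) (t : stdSimplex ℝ ι) : JoinFamily Y :=
  Quot.mk _ (y, t)

/-- The vertex of the standard simplex corresponding to `i₀`. -/
def stdSimplexVertex {ι : Type*} [Fintype ι] [DecidableEq ι] (i₀ : ι) : stdSimplex ℝ ι :=
  ⟨fun j => if j = i₀ then 1 else 0,
    fun j => by dsimp only; split <;> norm_num, by simp⟩

/-- The smash product `A ∧ B = (A × B)/(A ∨ B)`. -/
abbrev Smash (A B : Type*) [TopologicalSpace A] [TopologicalSpace B] (a₀ : A) (b₀ : B) :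
    Type _ :=
  Collapse {p : A × B | p.1 = a₀ ∨ p.2 = b₀}

/-- The right half-smash `A ⋊ B = (A × B)/(∗ × B)`. -/
abbrev RHalfSmash (A B : Type*) [TopologicalSpace A] [TopologicalSpace B] (a₀ : A) : Type _ :=
  Collapse {p : A × B | p.1 = a₀}

/-- The left half-smash `A ⋉ B = (A × B)/(A × ∗)`. -/
abbrev LHalfSmash (A B : Type*) [TopologicalSpace A] [TopologicalSpace B] (b₀ : B) : Type _ :=
  Collapse {p : A × B | p.2 = b₀}

/-- The reduced suspension `ΣA = (A × I)/(A × {0} ∪ A × {1} ∪ {a₀} × I)`. -/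
abbrev Susp (A : Type*) [TopologicalSpace A] (a₀ : A) : Type _ :=
  Collapse {p : A × unitInterval | p.1 = a₀ ∨ p.2 = 0 ∨ p.2 = 1}

/-- The basepoint of the reduced suspension. -/
def Susp.pt (A : Type*) [TopologicalSpace A] (a₀ : A) : Susp A a₀ :=
  Collapse.mk _ (a₀, 0)

/-- The map `Σf` induced on reduced suspensions by a pointed map `f`. -/
def Susp.map {A B : Type*} [TopologicalSpace A] [TopologicalSpace B] {a₀ : A} {b₀ : B}
    (f : C(A, B)) (hf : f a₀ = b₀) : C(Susp A a₀, Susp B b₀) :=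
  Collapse.desc ⟨fun p => (f p.1, p.2), (f.continuous.comp continuous_fst).prodMk continuous_snd⟩
    (fun p hp => by
      rcases hp with h | h
      · exact Or.inl (by simp [h, hf])
      · exact Or.inr h)

/-- The `m`-fold reduced suspension
`Σ^m A = (A × I^m)/(A × ∂(I^m) ∪ {a₀} × I^m)`. -/
abbrev iSusp (m : ℕ) (A : Type*) [TopologicalSpace A] (a₀ : A) : Type _ :=
  Collapse {p : A × (Fin m → unitInterval) | p.1 = a₀ ∨ ∃ j, p.2 j = 0 ∨ p.2 j = 1}

/-- The smash product of a finite family of pointed spaces: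
`⋀ᵢ Yᵢ = (∏ᵢ Yᵢ)/(fat wedge)`. -/
abbrev bigSmash {ι : Type*} (Y : ι → Type*) [∀ i, TopologicalSpace (Y i)]
    (pt : ∀ i, Y i) : Type _ :=
  Collapse {f : ∀ i, Y i | ∃ i, f i = pt i}

/-- The wedge sum `A ∨ B`. -/
abbrev Wedge (A B : Type*) [TopologicalSpace A] [TopologicalSpace B] (a₀ : A) (b₀ : B) :
    Type _ :=
  Collapse {x : A ⊕ B | x = Sum.inl a₀ ∨ x = Sum.inr b₀}

/-- The wedge of a family of spaces, each with a designated basepoint set `S i`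
(each `S i` should be a single point of `Y i`, possibly presented as a subset);
an extra disjoint point is wedged on so that the empty wedge is a point. -/
abbrev BigWedge {ι : Type*} (Y : ι → Type*) [∀ i, TopologicalSpace (Y i)]
    (S : ∀ i, Set (Y i)) : Type _ :=
  Collapse {p : (Σ i, Y i) ⊕ Unit |
    Sum.elim (fun q : Σ i, Y i => q.2 ∈ S q.1) (fun _ => True) p}

/-- The double mapping cylinder (homotopy pushout) of `f : X → Y` and `g : X → Z`. -/
abbrev DblCyl {X Y Z : Type*} [TopologicalSpace X] [TopologicalSpace Y] [TopologicalSpace Z]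
    (f : C(X, Y)) (g : C(X, Z)) : Type _ :=
  Quot (fun a b : Y ⊕ (X × unitInterval) ⊕ Z =>
    (∃ x, a = Sum.inl (f x) ∧ b = Sum.inr (Sum.inl (x, 0))) ∨
    (∃ x, a = Sum.inr (Sum.inr (g x)) ∧ b = Sum.inr (Sum.inl (x, 1))))

/-- The homotopy cofibre (mapping cone) of `f : X → Y`. -/
abbrev hCofiber {X Y : Type*} [TopologicalSpace X] [TopologicalSpace Y] (f : C(X, Y)) :
    Type _ :=
  DblCyl f (ContinuousMap.const X PUnit.unit)

/-- The basepoint (cone point) of the homotopy cofibre. -/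
def hCofiber.pt {X Y : Type*} [TopologicalSpace X] [TopologicalSpace Y] (f : C(X, Y)) :
    hCofiber f :=
  Quot.mk _ (Sum.inr (Sum.inr PUnit.unit))

/-! ### Simplicial complexes and polyhedral products -/

/-- An (abstract) simplicial complex on the vertex set `ι`, allowing ghost vertices:
a downward closed collection of finite subsets of `ι` containing the empty face. -/
def IsSimplicialComplex {ι : Type*} (K : Set (Finset ι)) : Prop :=
  ∅ ∈ K ∧ ∀ σ ∈ K, ∀ τ ⊆ σ, τ ∈ K

/-- `K` is shifted with respect to the order `r` on the vertices. -/
def ShiftedWrt {ι : Type*} [DecidableEq ι] (K : Set (Finset ι)) (r : ι → ι → Prop) : Prop :=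
  ∀ σ ∈ K, ∀ ν ∈ σ, ∀ ν', r ν' ν → insert ν' (σ.erase ν) ∈ K

/-- `K` is shifted: there is an ordering of the vertices for which whenever `σ ∈ K`,
`ν ∈ σ` and `ν' < ν`, also `(σ - ν) ∪ ν' ∈ K`. -/
def IsShifted {n : ℕ} (K : Set (Finset (Fin n))) : Prop :=
  ∃ e : Fin n ≃ Fin n, ShiftedWrt K (fun a b => e a < e b)

/-- For `σ ⊆ ι` and pairs `(Xᵢ, Aᵢ)`, the block `(X, A)^σ = ∏ Yᵢ` with `Yᵢ = Xᵢ` if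
`i ∈ σ` and `Yᵢ = Aᵢ` otherwise, as a subset of `∏ᵢ Xᵢ`. -/
def polyPiece {ι : Type*} (σ : Finset ι) {X : ι → Type*} (A : ∀ i, Set (X i)) :
    Set (∀ i, X i) :=
  {f | ∀ i, i ∉ σ → f i ∈ A i}

/-- The polyhedral product `(X, A)^K = ⋃_{σ ∈ K} (X, A)^σ` of the pairs `(Xᵢ, Aᵢ)`,
as a subset of `∏ᵢ Xᵢ`. -/
def polyProdXA {ι : Type*} (K : Set (Finset ι)) {X : ι → Type*} (A : ∀ i, Set (X i)) :
    Set (∀ i, X i) :=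
  {f | ∃ σ ∈ K, ∀ i, i ∉ σ → f i ∈ A i}

/-- The polyhedral product `(CX, X)^K` of the pairs `(CXᵢ, Xᵢ)`, as a subset
of `∏ᵢ CXᵢ`. -/
def polyProd {ι : Type*} (K : Set (Finset ι)) (X : ι → Type*)
    [∀ i, TopologicalSpace (X i)] : Set (∀ i, Cone (X i)) :=
  polyProdXA K (fun i => Set.range (Cone.incl (X := X i)))

/-- The canonical basepoint of `(CX, X)^K` (all coordinates at the basepoints,
included in the cones); it lies in the polyhedral product as soon as `∅ ∈ K`. -/
def polyProd.pt {ι : Type*} {K : Set (Finset ι)} {X : ι → Type*}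
    [∀ i, TopologicalSpace (X i)] (pt : ∀ i, X i) (h : ∅ ∈ K) : ↥(polyProd K X) :=
  ⟨fun i => Cone.incl (pt i), ⟨∅, h, fun i _ => ⟨pt i, rfl⟩⟩⟩

/-- The geometric realization of a simplicial complex `K` on the (finite) vertex set `ι`:
convex weightings of the vertices whose support is a face of `K`. -/
def geomReal {ι : Type*} [Fintype ι] (K : Set (Finset ι)) : Set (ι → ℝ) :=
  {w | (∀ v, 0 ≤ w v) ∧ (∑ v, w v = 1) ∧ ∃ σ ∈ K, {v | w v ≠ 0} = (σ : Set ι)}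

/-- `X` is (homeomorphic to the geometric realization of) a CW-complex. -/
def IsCWComplex (X : Type u) [TopologicalSpace X] : Prop :=
  ∃ C : TopCat.{u}, Nonempty (TopCat.CWComplex C) ∧ Nonempty (C ≃ₜ X)

lemma polyProd_mono {ι : Type*} {K₁ K₂ : Set (Finset ι)} (h : K₁ ⊆ K₂)
    {X : ι → Type*} [∀ i, TopologicalSpace (X i)] :
    polyProd K₁ X ⊆ polyProd K₂ X :=
  fun _ ⟨τ, hτ, hf⟩ => ⟨τ, h hτ, hf⟩

/-- A membership criterion for `(CX, X)^K`: a point whose coordinates in `σ` come from a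
point of `(CX, X)^{∂σ}` and whose coordinates outside of `σ` lie in `Xᵢ ⊆ CXᵢ` belongs to
`(CX, X)^K`, provided every proper face of `σ` belongs to `K`. -/
lemma mem_polyProd_of_boundary {ι : Type*}
    {K : Set (Finset ι)} {σ : Finset ι} (hσ : ∀ τ, τ ⊂ σ → τ ∈ K)
    {X : ι → Type*} [∀ i, TopologicalSpace (X i)]
    (c : ↥(polyProd {τ : Finset ↥σ | τ ≠ Finset.univ} (fun i : ↥σ => X i)))
    (f : ∀ i, Cone (X i))
    (hf₁ : ∀ i (h : i ∈ σ), f i = c.1 ⟨i, h⟩)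
    (hf₂ : ∀ i, i ∉ σ → f i ∈ Set.range (Cone.incl (X := X i))) :
    f ∈ polyProd K X := by
  obtain ⟨τ, hτ, hc⟩ := c.2
  refine ⟨τ.map (Function.Embedding.subtype _), ?_, ?_⟩
  · refine hσ _ (lt_of_le_of_ne ?_ ?_)
    · intro i hi
      simp only [Finset.mem_map, Function.Embedding.coe_subtype] at hi
      obtain ⟨a, _, rfl⟩ := hi
      exact a.2
    · intro hρσ
      apply hτ
      refine Finset.eq_univ_iff_forall.mpr (fun a => ?_)
      have ha : (a : ι) ∈ τ.map (Function.Embedding.subtype _) := by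
        rw [hρσ]; exact a.2
      simp only [Finset.mem_map, Function.Embedding.coe_subtype] at ha
      obtain ⟨b, hb, hba⟩ := ha
      exact (Subtype.ext hba) ▸ hb
  · intro i hi
    by_cases h : i ∈ σ
    · rw [hf₁ i h]
      refine hc ⟨i, h⟩ (fun hmem => hi ?_)
      exact Finset.mem_map.mpr ⟨⟨i, h⟩, hmem, rfl⟩
    · exact hf₂ i h

/-- The canonical map `(CX, X)^{∂σ} × ∏_{i ∉ σ} Xᵢ ⟶ (CX, X)^K`, available whenever every
proper face of `σ` is a face of `K`. -/
def boundarySmashMap {ι : Type*} [DecidableEq ι] {K : Set (Finset ι)} {σ : Finset ι}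
    (hσ : ∀ τ, τ ⊂ σ → τ ∈ K)
    (X : ι → Type*) [∀ i, TopologicalSpace (X i)] :
    C(↥(polyProd {τ : Finset ↥σ | τ ≠ Finset.univ} (fun i : ↥σ => X i)) ×
        (∀ j : {j : ι // j ∉ σ}, X j),
      ↥(polyProd K X)) :=
  ⟨fun p => ⟨fun i => if h : i ∈ σ then p.1.1 ⟨i, h⟩ else Cone.incl (p.2 ⟨i, h⟩),
      mem_polyProd_of_boundary hσ p.1 _ (fun i h => dif_pos h)
        (fun i h => by rw [dif_neg h]; exact ⟨p.2 ⟨i, h⟩, rfl⟩)⟩,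
    by
      apply Continuous.subtype_mk
      apply continuous_pi
      intro i
      by_cases h : i ∈ σ
      · simp only [dif_pos h]
        exact (continuous_apply _).comp (continuous_subtype_val.comp continuous_fst)
      · simp only [dif_neg h]
        exact Cone.incl.continuous.comp ((continuous_apply _).comp continuous_snd)⟩

/-! Shiftedness lets any vertex `v ≠ v₀` of a face be traded for the least vertex `v₀`.
If `τ ∈ rest \ link` lay in a larger face `ρ ∈ rest`, trading a vertex of `ρ ∖ τ` would put
`τ ∪ {v₀}` into `K`; and for `ρ ⊊ τ`, trading a vertex `v ∈ τ ∖ ρ` in `ρ ∪ {v}` puts `ρ ∪ {v₀}`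
into `K`. So the faces of `rest \ link` are maximal in `rest` with boundary in `link`, and
adjoining them one at a time, in any order, filters `link ⊆ rest`. -/

section InsertChain

variable {α : Type*}

theorem exists_insert_chain_union_finset (s : Finset α) (A : Set α) :
    ∃ (m : ℕ) (L : ℕ → Set α), L 0 = A ∧ L m = A ∪ s ∧
      ∀ i < m, ∃ τ ∈ s, L (i + 1) = insert τ (L i) := by
  induction s using Finset.cons_induction generalizing A with
  | empty => exact ⟨0, fun _ => A, rfl, by simp, by simp⟩
  | cons a s ha ih =>
    obtain ⟨m, L, hL₀, hLm, hstep⟩ := ih (insert a A)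
    refine ⟨m + 1, fun | 0 => A | i + 1 => L i, rfl, ?_, ?_⟩
    · simp only [hLm, Finset.coe_cons, Set.insert_union, Set.union_insert]
    · rintro (_ | i) hi
      · exact ⟨a, Finset.mem_cons_self a s, hL₀⟩
      · obtain ⟨τ, hτ, hL⟩ := hstep i (by omega)
        exact ⟨τ, Finset.mem_cons_of_mem hτ, hL⟩

theorem exists_insert_chain_of_subset {A B : Set α} (hAB : A ⊆ B) (hfin : (B \ A).Finite) :
    ∃ (m : ℕ) (L : ℕ → Set α), L 0 = A ∧ L m = B ∧
      ∀ i < m, ∃ τ ∈ B \ A, L (i + 1) = insert τ (L i) := by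
  obtain ⟨m, L, hL₀, hLm, hstep⟩ := exists_insert_chain_union_finset hfin.toFinset A
  refine ⟨m, L, hL₀, by rw [hLm, Set.Finite.coe_toFinset, Set.union_sdiff_cancel hAB], ?_⟩
  simpa only [Set.Finite.mem_toFinset] using hstep

end InsertChain

section LinkRest

variable {ι : Type*} [DecidableEq ι]

/-- `rest_K(V ∖ {v})`, the full subcomplex on the vertices other than `v`. -/
def rest (K : Set (Finset ι)) (v : ι) : Set (Finset ι) :=
  {ρ | ρ ∈ K ∧ v ∉ ρ}

def link (K : Set (Finset ι)) (v : ι) : Set (Finset ι) :=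
  {ρ | ρ ∈ K ∧ v ∉ ρ ∧ insert v ρ ∈ K}

theorem link_subset_rest (K : Set (Finset ι)) (v : ι) : link K v ⊆ rest K v :=
  fun _ hρ => ⟨hρ.1, hρ.2.1⟩

variable [PartialOrder ι] {K : Set (Finset ι)} {v₀ : ι}
  (hK : ∀ σ ∈ K, ∀ τ ⊆ σ, τ ∈ K) (hsh : ShiftedWrt K (· < ·)) (h₀ : IsBot v₀)
include hK hsh h₀

theorem eq_of_subset_of_insert_notMem {τ ρ : Finset ι} (hτ : insert v₀ τ ∉ K)
    (hρ : ρ ∈ rest K v₀) (hτρ : τ ⊆ ρ) : ρ = τ := by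
  by_contra hne
  obtain ⟨v, hvρ, hvτ⟩ := Finset.exists_of_ssubset (hτρ.ssubset_of_ne (Ne.symm hne))
  have hv : v₀ < v := (h₀ v).lt_of_ne (by rintro rfl; exact hρ.2 hvρ)
  refine hτ (hK _ (hsh ρ hρ.1 v hvρ v₀ hv) _ (Finset.insert_subset_insert _ ?_))
  exact fun x hx => Finset.mem_erase.mpr ⟨by rintro rfl; exact hvτ hx, hτρ hx⟩

theorem mem_link_of_ssubset {τ ρ : Finset ι} (hτ : τ ∈ rest K v₀) (hρτ : ρ ⊂ τ) :
    ρ ∈ link K v₀ := by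
  obtain ⟨v, hvτ, hvρ⟩ := Finset.exists_of_ssubset hρτ
  have hv : v₀ < v := (h₀ v).lt_of_ne (by rintro rfl; exact hτ.2 hvτ)
  have hvρK : insert v ρ ∈ K := hK τ hτ.1 _ (Finset.insert_subset hvτ hρτ.subset)
  have h := hsh _ hvρK v (Finset.mem_insert_self v ρ) v₀ hv
  rw [Finset.erase_insert hvρ] at h
  exact ⟨hK τ hτ.1 ρ hρτ.subset, fun h => hτ.2 (hρτ.subset h), h⟩

end LinkRest

-- The paper's vertex `1` is `0 : Fin (n + 1)` here.
/-- Lemma 5.5. For a shifted complex `K` (with respect to the standard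
ordering, the least vertex being `0 : Fin (n+1)`), the inclusion
`link_K(0) → rest_K{2, …, n}` is filtered by complexes
`link_K(0) = L 0 ⊆ L 1 ⊆ ⋯ ⊆ L m = rest_K{2, …, n}`, where each `L (i+1)` is obtained
from `L i` by adjoining a single face `τ` which (a) is a maximal face of `rest`,
(b) is not in `link_K(0)`, and (c) has its entire boundary `∂τ` inside `link_K(0)`. -/
theorem link_rest_filtration {n : ℕ} (K : Set (Finset (Fin (n + 1))))
    (hK : IsSimplicialComplex K) (hsh : ShiftedWrt K (· < ·)) :
    ∃ (m : ℕ) (L : ℕ → Set (Finset (Fin (n + 1)))),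
      L 0 = {ρ | ρ ∈ K ∧ (0 : Fin (n + 1)) ∉ ρ ∧ insert (0 : Fin (n + 1)) ρ ∈ K} ∧
      L m = {ρ | ρ ∈ K ∧ (0 : Fin (n + 1)) ∉ ρ} ∧
      (∀ i < m, L i ⊆ L (i + 1)) ∧
      (∀ i < m, ∃ τ : Finset (Fin (n + 1)),
        (τ ∈ K ∧ (0 : Fin (n + 1)) ∉ τ) ∧
        (∀ ρ, (ρ ∈ K ∧ (0 : Fin (n + 1)) ∉ ρ) → τ ⊆ ρ → ρ = τ) ∧
        τ ∉ {ρ | ρ ∈ K ∧ (0 : Fin (n + 1)) ∉ ρ ∧ insert (0 : Fin (n + 1)) ρ ∈ K} ∧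
        (∀ ρ, ρ ⊂ τ →
          ρ ∈ {ρ' | ρ' ∈ K ∧ (0 : Fin (n + 1)) ∉ ρ' ∧ insert (0 : Fin (n + 1)) ρ' ∈ K}) ∧
        L (i + 1) = insert τ (L i)) := by
  have h₀ : IsBot (0 : Fin (n + 1)) := Fin.zero_le
  obtain ⟨m, L, hL₀, hLm, hstep⟩ :=
    exists_insert_chain_of_subset (link_subset_rest K 0) (Set.toFinite _)
  refine ⟨m, L, hL₀, hLm, fun i hi => ?_, fun i hi => ?_⟩
  · obtain ⟨τ, -, hL⟩ := hstep i hi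
    exact hL ▸ Set.subset_insert τ (L i)
  · obtain ⟨τ, ⟨hτ, hτlink⟩, hL⟩ := hstep i hi
    refine ⟨τ, hτ, fun ρ hρ => eq_of_subset_of_insert_notMem hK.2 hsh h₀ ?_ hρ, hτlink,
      fun ρ => mem_link_of_ssubset hK.2 hsh h₀ hτ, hL⟩
    exact fun h => hτlink ⟨hτ.1, hτ.2, h⟩
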